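/- arXiv:2510.22660 — 6 statements merged into one kernel-verified Lean document; each statement's English description precedes it below -/
import Mathlib

section
/- Let X be a set, T > 0, K ≥ 0, and for each r ∈ (0, √T] let d_r be a pseudometric on X satisfying the distortion property d_ρ(x,y) ≤ d_r(x,y) + K(ρ − r) for all 0 < r ≤ ρ ≤ √T and all x, y ∈ X. Define D_R(x,y) = inf{ r ∈ (0, √T] : d_r(x,y) < rR } (with D_R(x,y) = +∞ if no such r exists). Let σ > 1 and suppose R ≥ K(2σ − 1)/(σ − 1). Then for all x, y, z ∈ X with σ·(D_R(x,z) + D_R(z,y)) < √T, one has D_R(x,y) ≤ σ·(D_R(x,z) + D_R(z,y)). -/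
open scoped ENNReal

/-- The `R`-scale distance associated with a family of pseudometrics `d r`,
`r ∈ (0, √T]`: `D_R(x,y) = inf { r ∈ (0, √T] : d_r(x,y) < rR }`, with value `∞`
if no such `r` exists. -/
noncomputable def scaleDist {X : Type*} (d : ℝ → X → X → ℝ) (T R : ℝ)
    (x y : X) : ℝ≥0∞ :=
  sInf {e : ℝ≥0∞ | ∃ r : ℝ, 0 < r ∧ r ≤ Real.sqrt T ∧ d r x y < r * R ∧
    e = ENNReal.ofReal r}

/-- Quasi-triangle inequality for the `R`-scale distance: if each `d r` is a
pseudometric satisfying the distortion `d ρ ≤ d r + K(ρ − r)` for `r ≤ ρ`, and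
`R ≥ K(2σ−1)/(σ−1)` with `σ > 1`, then
`D_R(x,y) ≤ σ (D_R(x,z) + D_R(z,y))` whenever `σ (D_R(x,z) + D_R(z,y)) < √T`. -/
theorem scaleDist_quasi_triangle {X : Type*} (d : ℝ → X → X → ℝ)
    (T K σ R : ℝ) (hT : 0 < T) (hK : 0 ≤ K) (hσ : 1 < σ)
    (hnonneg : ∀ r, 0 < r → r ≤ Real.sqrt T → ∀ x y, 0 ≤ d r x y)
    (hsymm : ∀ r, 0 < r → r ≤ Real.sqrt T → ∀ x y, d r x y = d r y x)
    (hself : ∀ r, 0 < r → r ≤ Real.sqrt T → ∀ x, d r x x = 0)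
    (htri : ∀ r, 0 < r → r ≤ Real.sqrt T → ∀ x y z,
      d r x y ≤ d r x z + d r z y)
    (hdistort : ∀ r ρ, 0 < r → r ≤ ρ → ρ ≤ Real.sqrt T → ∀ x y,
      d ρ x y ≤ d r x y + K * (ρ - r))
    (hR : K * (2 * σ - 1) / (σ - 1) ≤ R) :
    ∀ x y z : X,
      ENNReal.ofReal σ * (scaleDist d T R x z + scaleDist d T R z y) <
        ENNReal.ofReal (Real.sqrt T) →
      scaleDist d T R x y ≤
        ENNReal.ofReal σ * (scaleDist d T R x z + scaleDist d T R z y) := by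
  have hσ0 : (0:ℝ) < σ := by linarith
  have hKR : K * (2 * σ - 1) ≤ (σ - 1) * R := by
    rw [div_le_iff₀ (by linarith : (0:ℝ) < σ - 1)] at hR
    linarith [hR]
  -- key step: combining two witnesses
  have key : ∀ x y z : X, ∀ r₁ r₂ : ℝ, 0 < r₁ → 0 < r₂ →
      d r₁ x z < r₁ * R → d r₂ z y < r₂ * R → σ * (r₁ + r₂) ≤ Real.sqrt T →
      scaleDist d T R x y ≤ ENNReal.ofReal (σ * (r₁ + r₂)) := by
    intro x y z r₁ r₂ h₁ h₂ hd₁ hd₂ hρT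
    set ρ := σ * (r₁ + r₂) with hρdef
    have hρ0 : 0 < ρ := by positivity
    have hr₁ρ : r₁ ≤ ρ := by nlinarith
    have hr₂ρ : r₂ ≤ ρ := by nlinarith
    have hdρ : d ρ x y < ρ * R := by
      have t1 := htri ρ hρ0 hρT x y z
      have t2 := hdistort r₁ ρ h₁ hr₁ρ hρT x z
      have t3 := hdistort r₂ ρ h₂ hr₂ρ hρT z y
      have e2 : K * (2 * ρ - r₁ - r₂) = (K * (2 * σ - 1)) * (r₁ + r₂) := by
        rw [hρdef]; ring
      have h4 : (K * (2 * σ - 1)) * (r₁ + r₂) ≤ ((σ - 1) * R) * (r₁ + r₂) :=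
        mul_le_mul_of_nonneg_right hKR (add_pos h₁ h₂).le
      have e3 : ((σ - 1) * R) * (r₁ + r₂) = ρ * R - (r₁ * R + r₂ * R) := by
        rw [hρdef]; ring
      linarith
    exact sInf_le ⟨ρ, hρ0, hρT, hdρ, rfl⟩
  intro x y z h
  set A := scaleDist d T R x z with hA
  set B := scaleDist d T R z y with hB
  have hσne : ENNReal.ofReal σ ≠ 0 := by
    simp [ENNReal.ofReal_eq_zero]; linarith
  have hABfin : A + B ≠ ∞ := by
    intro hcon
    rw [hcon, ENNReal.mul_top hσne] at h
    exact (not_top_lt h).elim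
  have hAfin : A ≠ ∞ := fun hc => hABfin (by simp [hc])
  have hBfin : B ≠ ∞ := fun hc => hABfin (by simp [hc])
  set a := A.toReal with ha
  set b := B.toReal with hb
  have ha0 : 0 ≤ a := ENNReal.toReal_nonneg
  have hb0 : 0 ≤ b := ENNReal.toReal_nonneg
  have hAa : A = ENNReal.ofReal a := (ENNReal.ofReal_toReal hAfin).symm
  have hBb : B = ENNReal.ofReal b := (ENNReal.ofReal_toReal hBfin).symm
  have hsum : ENNReal.ofReal σ * (A + B) = ENNReal.ofReal (σ * (a + b)) := by
    rw [hAa, hBb, ← ENNReal.ofReal_add ha0 hb0,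
      ← ENNReal.ofReal_mul (le_of_lt hσ0)]
  have hT' : 0 < Real.sqrt T := Real.sqrt_pos.2 hT
  have habT : σ * (a + b) < Real.sqrt T := by
    rw [hsum] at h
    exact (ENNReal.ofReal_lt_ofReal_iff hT').1 h
  rw [hsum]
  apply ENNReal.le_of_forall_pos_le_add
  intro ε hε _
  set δ : ℝ := min ((Real.sqrt T - σ * (a + b)) / (2 * σ)) ((ε : ℝ) / (2 * σ))
    with hδdef
  have hδ0 : 0 < δ := by
    apply lt_min
    · apply div_pos (by linarith) (by linarith)
    · apply div_pos (by exact_mod_cast hε) (by linarith)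
  have hδ1 : 2 * σ * δ ≤ Real.sqrt T - σ * (a + b) := by
    have := min_le_left ((Real.sqrt T - σ * (a + b)) / (2 * σ)) ((ε : ℝ) / (2 * σ))
    rw [← hδdef] at this
    rw [mul_comm]
    exact (le_div_iff₀ (by linarith : (0:ℝ) < 2 * σ)).1 this
  have hδ2 : 2 * σ * δ ≤ (ε : ℝ) := by
    have := min_le_right ((Real.sqrt T - σ * (a + b)) / (2 * σ)) ((ε : ℝ) / (2 * σ))
    rw [← hδdef] at this
    rw [mul_comm]
    exact (le_div_iff₀ (by linarith : (0:ℝ) < 2 * σ)).1 this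
  -- choose witnesses r₁, r₂
  have hA' : A < A + ENNReal.ofReal δ := by
    apply ENNReal.lt_add_right hAfin
    simp [ENNReal.ofReal_eq_zero]; linarith
  have hB' : B < B + ENNReal.ofReal δ := by
    apply ENNReal.lt_add_right hBfin
    simp [ENNReal.ofReal_eq_zero]; linarith
  obtain ⟨e₁, he₁, he₁lt⟩ := sInf_lt_iff.1 (show sInf {e : ℝ≥0∞ | ∃ r : ℝ,
    0 < r ∧ r ≤ Real.sqrt T ∧ d r x z < r * R ∧ e = ENNReal.ofReal r} < A + ENNReal.ofReal δ
    by rw [← scaleDist, ← hA]; exact hA')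
  obtain ⟨e₂, he₂, he₂lt⟩ := sInf_lt_iff.1 (show sInf {e : ℝ≥0∞ | ∃ r : ℝ,
    0 < r ∧ r ≤ Real.sqrt T ∧ d r z y < r * R ∧ e = ENNReal.ofReal r} < B + ENNReal.ofReal δ
    by rw [← scaleDist, ← hB]; exact hB')
  obtain ⟨r₁, hr₁0, hr₁T, hd₁, rfl⟩ := he₁
  obtain ⟨r₂, hr₂0, hr₂T, hd₂, rfl⟩ := he₂
  have hr₁a : r₁ < a + δ := by
    rw [hAa, ← ENNReal.ofReal_add ha0 (le_of_lt hδ0)] at he₁lt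
    exact (ENNReal.ofReal_lt_ofReal_iff (by linarith)).1 he₁lt
  have hr₂b : r₂ < b + δ := by
    rw [hBb, ← ENNReal.ofReal_add hb0 (le_of_lt hδ0)] at he₂lt
    exact (ENNReal.ofReal_lt_ofReal_iff (by linarith)).1 he₂lt
  have hρT : σ * (r₁ + r₂) ≤ Real.sqrt T := by nlinarith
  have := key x y z r₁ r₂ hr₁0 hr₂0 hd₁ hd₂ hρT
  refine this.trans ?_
  calc ENNReal.ofReal (σ * (r₁ + r₂))
      ≤ ENNReal.ofReal (σ * (a + b) + (ε : ℝ)) := by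
        apply ENNReal.ofReal_le_ofReal; nlinarith
    _ = ENNReal.ofReal (σ * (a + b)) + ε := by
        rw [ENNReal.ofReal_add (by positivity) (by positivity)]
        simp
end

section
/- Let X be a set, T > 0, K ≥ 0, and for each r ∈ (0, √T] let d_r be a pseudometric on X satisfying the distortion property d_ρ(x,y) ≤ d_r(x,y) + K(ρ − r) for all 0 < r ≤ ρ ≤ √T and all x, y ∈ X. Define D_R(x,y) = inf{ r ∈ (0, √T] : d_r(x,y) < rR } (with D_R(x,y) = +∞ if no such r exists). Then for all K < R₁ ≤ R₂ and all x, y ∈ X: (i) D_{R₂}(x,y) ≤ D_{R₁}(x,y); and (ii) if ((R₂ − K)/(R₁ − K))·D_{R₂}(x,y) < √T, then D_{R₁}(x,y) ≤ ((R₂ − K)/(R₁ − K))·D_{R₂}(x,y). -/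
open scoped ENNReal

theorem le_sInf_of_sInf_lt {α : Type*} [CompleteLinearOrder α] {s : Set α} {a b : α}
    (hs : sInf s < a) (h : ∀ e ∈ s, e < a → b ≤ e) : b ≤ sInf s := by
  by_contra! hlt
  obtain ⟨e, he, helt⟩ := sInf_lt_iff.mp (lt_min hlt hs)
  exact (h e he (helt.trans_le (min_le_right _ _))).not_gt (helt.trans_le (min_le_left _ _))

section ScaleDist

variable {X : Type*} (d : ℝ → X → X → ℝ) (T : ℝ)

theorem scaleDist_antitone (x y : X) : Antitone fun R => scaleDist d T R x y :=
  fun _ _ hR => sInf_le_sInf fun _ ⟨r, hr0, hrT, hd, he⟩ =>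
    ⟨r, hr0, hrT, hd.trans_le (mul_le_mul_of_nonneg_left hR hr0.le), he⟩

variable {d T}

theorem scaleDist_le_ofReal {R r : ℝ} {x y : X} (hr0 : 0 < r) (hrT : r ≤ Real.sqrt T)
    (hd : d r x y < r * R) : scaleDist d T R x y ≤ ENNReal.ofReal r :=
  sInf_le ⟨r, hr0, hrT, hd, rfl⟩

variable {K : ℝ}
  (hdistort : ∀ r ρ, 0 < r → r ≤ ρ → ρ ≤ Real.sqrt T → ∀ x y,
    d ρ x y ≤ d r x y + K * (ρ - r))
include hdistort

/- Distortion from `r` to `c r` costs at most `K (c - 1) r`, which the gap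
`c (R₁ - K) ≥ R₂ - K` absorbs. -/
theorem dist_scale_mul_lt {R₁ R₂ c r : ℝ} {x y : X} (hc : 1 ≤ c)
    (hR : R₂ - K ≤ c * (R₁ - K)) (hr0 : 0 < r) (hcrT : c * r ≤ Real.sqrt T)
    (hd : d r x y < r * R₂) : d (c * r) x y < c * r * R₁ := by
  have hrcr : r ≤ c * r := le_mul_of_one_le_left hr0.le hc
  calc d (c * r) x y ≤ d r x y + K * (c * r - r) := hdistort r (c * r) hr0 hrcr hcrT x y
    _ < r * R₂ + K * (c * r - r) := by gcongr
    _ = r * (R₂ - K) + c * r * K := by ring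
    _ ≤ r * (c * (R₁ - K)) + c * r * K := by gcongr
    _ = c * r * R₁ := by ring

theorem scaleDist_le_mul_scaleDist {R₁ R₂ c : ℝ} (hc : 1 ≤ c)
    (hR : R₂ - K ≤ c * (R₁ - K)) (x y : X)
    (hlt : ENNReal.ofReal c * scaleDist d T R₂ x y < ENNReal.ofReal (Real.sqrt T)) :
    scaleDist d T R₁ x y ≤ ENNReal.ofReal c * scaleDist d T R₂ x y := by
  have hC0 : ENNReal.ofReal c ≠ 0 := (ENNReal.ofReal_pos.mpr (by linarith)).ne'
  have hmul (s : Set ℝ≥0∞) :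
      ENNReal.ofReal c * sInf s = sInf ((ENNReal.ofReal c * ·) '' s) :=
    Monotone.map_sInf_of_continuousAt
      (ENNReal.continuous_const_mul ENNReal.ofReal_ne_top).continuousAt
      (fun _ _ h => mul_le_mul_right h _) (ENNReal.mul_top hC0)
  unfold scaleDist at hlt ⊢
  rw [hmul] at hlt ⊢
  refine le_sInf_of_sInf_lt hlt ?_
  rintro _ ⟨_, ⟨r, hr0, -, hd, rfl⟩, rfl⟩ hcrT
  dsimp only at hcrT ⊢
  rw [← ENNReal.ofReal_mul (by linarith)] at hcrT ⊢
  have hcrT : c * r < Real.sqrt T := (ENNReal.ofReal_lt_ofReal_iff'.mp hcrT).1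
  exact scaleDist_le_ofReal (by positivity) hcrT.le
    (dist_scale_mul_lt hdistort hc hR hr0 hcrT.le hd)

end ScaleDist

theorem scaleDist_monotone_compare_general {X : Type*} (d : ℝ → X → X → ℝ)
    (T K : ℝ)
    (hdistort : ∀ r ρ, 0 < r → r ≤ ρ → ρ ≤ Real.sqrt T → ∀ x y,
      d ρ x y ≤ d r x y + K * (ρ - r)) :
    ∀ R₁ R₂ : ℝ, K < R₁ → R₁ ≤ R₂ → ∀ x y : X,
      scaleDist d T R₂ x y ≤ scaleDist d T R₁ x y ∧
      (ENNReal.ofReal ((R₂ - K) / (R₁ - K)) * scaleDist d T R₂ x y <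
          ENNReal.ofReal (Real.sqrt T) →
        scaleDist d T R₁ x y ≤
          ENNReal.ofReal ((R₂ - K) / (R₁ - K)) * scaleDist d T R₂ x y) := by
  intro R₁ R₂ hR₁ hR₁₂ x y
  have hgap : 0 < R₁ - K := sub_pos.mpr hR₁
  refine ⟨scaleDist_antitone d T x y hR₁₂, scaleDist_le_mul_scaleDist hdistort ?_ ?_ x y⟩
  · exact (one_le_div hgap).mpr (by linarith)
  · exact (div_mul_cancel₀ _ hgap.ne').ge

/-- Comparison of `R`-scale distances for different `R`: for `K < R₁ ≤ R₂`,
`D_{R₂}(x,y) ≤ D_{R₁}(x,y)`, and if `((R₂−K)/(R₁−K))·D_{R₂}(x,y) < √T` then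
`D_{R₁}(x,y) ≤ ((R₂−K)/(R₁−K))·D_{R₂}(x,y)`. -/
theorem scaleDist_monotone_compare {X : Type*} (d : ℝ → X → X → ℝ)
    (T K : ℝ) (hT : 0 < T) (hK : 0 ≤ K)
    (hnonneg : ∀ r, 0 < r → r ≤ Real.sqrt T → ∀ x y, 0 ≤ d r x y)
    (hsymm : ∀ r, 0 < r → r ≤ Real.sqrt T → ∀ x y, d r x y = d r y x)
    (hself : ∀ r, 0 < r → r ≤ Real.sqrt T → ∀ x, d r x x = 0)
    (htri : ∀ r, 0 < r → r ≤ Real.sqrt T → ∀ x y z,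
      d r x y ≤ d r x z + d r z y)
    (hdistort : ∀ r ρ, 0 < r → r ≤ ρ → ρ ≤ Real.sqrt T → ∀ x y,
      d ρ x y ≤ d r x y + K * (ρ - r)) :
    ∀ R₁ R₂ : ℝ, K < R₁ → R₁ ≤ R₂ → ∀ x y : X,
      scaleDist d T R₂ x y ≤ scaleDist d T R₁ x y ∧
      (ENNReal.ofReal ((R₂ - K) / (R₁ - K)) * scaleDist d T R₂ x y <
          ENNReal.ofReal (Real.sqrt T) →
        scaleDist d T R₁ x y ≤
          ENNReal.ofReal ((R₂ - K) / (R₁ - K)) * scaleDist d T R₂ x y) :=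
  scaleDist_monotone_compare_general d T K hdistort
end

section
/- Let X be a set, T > 0, K ≥ 0, and for each r ∈ (0, √T] let d_r be a pseudometric on X satisfying the distortion property d_ρ(x,y) ≤ d_r(x,y) + K·ρ for all 0 < r ≤ ρ ≤ √T and all x, y ∈ X. Define D_R(x,y) = inf{ r ∈ (0, √T] : d_r(x,y) < rR } (with D_R(x,y) = +∞ if no such r exists). Let 0 < τ ≤ 1/3, R > 0 with K ≤ τ³R, and let s ∈ (0, √T]. If D_{2R}(x,y) < τ³·s, then D_{τ²R}(x,y) ≤ s. -/
open scoped ENNReal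

/-- Ball inclusion `B̃_{2R}(x, τ³ s) ⊆ B̃_{τ²R}(x, s)`: with the weak distortion
`d ρ ≤ d r + K ρ` for `r ≤ ρ`, `0 < τ ≤ 1/3` and `K ≤ τ³ R`, if
`D_{2R}(x,y) < τ³ s` then `D_{τ²R}(x,y) ≤ s`. -/
theorem scaleDist_ball_inclusion {X : Type*} (d : ℝ → X → X → ℝ)
    (T K τ R : ℝ) (hT : 0 < T) (hK : 0 ≤ K)
    (hnonneg : ∀ r, 0 < r → r ≤ Real.sqrt T → ∀ x y, 0 ≤ d r x y)
    (hsymm : ∀ r, 0 < r → r ≤ Real.sqrt T → ∀ x y, d r x y = d r y x)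
    (hself : ∀ r, 0 < r → r ≤ Real.sqrt T → ∀ x, d r x x = 0)
    (htri : ∀ r, 0 < r → r ≤ Real.sqrt T → ∀ x y z,
      d r x y ≤ d r x z + d r z y)
    (hdistort : ∀ r ρ, 0 < r → r ≤ ρ → ρ ≤ Real.sqrt T → ∀ x y,
      d ρ x y ≤ d r x y + K * ρ)
    (hτ : 0 < τ) (hτ' : τ ≤ 1 / 3) (hR : 0 < R) (hKR : K ≤ τ ^ 3 * R)
    (s : ℝ) (hs : 0 < s) (hs' : s ≤ Real.sqrt T) :
    ∀ x y : X,
      scaleDist d T (2 * R) x y < ENNReal.ofReal (τ ^ 3 * s) →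
      scaleDist d T (τ ^ 2 * R) x y ≤ ENNReal.ofReal s := by
  intro x y h
  obtain ⟨e, ⟨r, hr0, hrT, hd, rfl⟩, hlt⟩ := (sInf_lt_iff).mp h
  have hrs : r < τ ^ 3 * s := by
    have := (ENNReal.ofReal_lt_ofReal_iff (by positivity)).mp hlt
    exact this
  have hrles : r ≤ s := by nlinarith [pow_le_one₀ (le_of_lt hτ) (le_trans hτ' (by norm_num)) (n := 3)]
  have hds : d s x y < s * (τ ^ 2 * R) := by
    have h1 := hdistort r s hr0 hrles hs' x y
    have h2 : r * (2 * R) < (τ ^ 3 * s) * (2 * R) :=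
      mul_lt_mul_of_pos_right hrs (by positivity)
    have h3 : K * s ≤ τ ^ 3 * R * s := mul_le_mul_of_nonneg_right hKR hs.le
    have h4 : 3 * (τ ^ 3 * (R * s)) ≤ τ ^ 2 * (R * s) := by nlinarith [mul_nonneg (mul_nonneg (sq_nonneg τ) (mul_pos hR hs).le) (by linarith : (0:ℝ) ≤ 1 - 3 * τ)]
    nlinarith
  exact sInf_le ⟨s, hs, hs', hds, rfl⟩
end

section
/- Let X be a set and ρ : X × X → [0, ∞) a symmetric function with ρ(x,x) = 0 for all x, satisfying the quasi-triangle inequality ρ(a,b) ≤ σ·(ρ(a,c) + ρ(c,b)) for all a, b, c ∈ X, where 1 < σ < √2. Let 𝒞 ⊆ X be a finite nonempty set and r̃ : 𝒞 → (0, ∞) a function such that ρ(a,b) ≥ 4·r̃(a) for all distinct a, b ∈ 𝒞. Fix δ ∈ (0, 1) and define r : X → (0, ∞) as follows: if there exists a ∈ 𝒞 with ρ(x,a) = min_{c ∈ 𝒞} ρ(x,c) and ρ(x,a) ≤ r̃(a) (such a is necessarily unique), set r(x) = δ²·r̃(a); otherwise set r(x) = δ²·min_{c ∈ 𝒞} ρ(x,c).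 Then for all x, y ∈ X one has r(x) ≤ σ·r(y) + σ·δ²·ρ(x,y). -/
set_option maxHeartbeats 1000000 in
/-- Lemma 4.4: the refined radius function is `(σ, δ)`-Lipschitz for the
quasi-metric `ρ`. Here `r` is the function defined by `r(x) = δ² r̃(a)` if the
nearest point `a ∈ 𝒞` to `x` (realizing `min_{c ∈ 𝒞} ρ(x,c)`) satisfies
`ρ(x,a) ≤ r̃(a)`, and `r(x) = δ² min_{c ∈ 𝒞} ρ(x,c)` otherwise. The conclusion
is `r(x) ≤ σ r(y) + σ δ² ρ(x,y)` for all `x, y`. -/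
theorem refined_radius_lipschitz {X : Type*} (ρ : X → X → ℝ) (σ δ : ℝ)
    (hρnonneg : ∀ x y, 0 ≤ ρ x y)
    (hρsymm : ∀ x y, ρ x y = ρ y x)
    (hρself : ∀ x, ρ x x = 0)
    (htri : ∀ a b c, ρ a b ≤ σ * (ρ a c + ρ c b))
    (hσ1 : 1 < σ) (hσ2 : σ < Real.sqrt 2)
    (hδ0 : 0 < δ) (hδ1 : δ < 1)
    (C : Finset X) (hC : C.Nonempty)
    (rt : X → ℝ) (hrt : ∀ a ∈ C, 0 < rt a)
    (hsep : ∀ a ∈ C, ∀ b ∈ C, a ≠ b → 4 * rt a ≤ ρ a b)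
    (r : X → ℝ)
    (hr1 : ∀ x, ∀ a ∈ C, (∀ c ∈ C, ρ x a ≤ ρ x c) → ρ x a ≤ rt a →
      r x = δ ^ 2 * rt a)
    (hr2 : ∀ x, (¬ ∃ a ∈ C, (∀ c ∈ C, ρ x a ≤ ρ x c) ∧ ρ x a ≤ rt a) →
      ∃ a ∈ C, (∀ c ∈ C, ρ x a ≤ ρ x c) ∧ r x = δ ^ 2 * ρ x a) :
    ∀ x y : X, r x ≤ σ * r y + σ * δ ^ 2 * ρ x y := by
  have hσ0 : (0:ℝ) < σ := lt_trans one_pos hσ1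
  have h2 : Real.sqrt 2 ^ 2 = 2 := Real.sq_sqrt (by norm_num)
  have hσsq : σ ^ 2 < 2 := by nlinarith [Real.sqrt_nonneg 2]
  have hσlt2 : σ < 2 := by nlinarith
  have hδsq : (0:ℝ) < δ ^ 2 := by positivity
  intro x y
  have hρxy := hρnonneg x y
  by_cases hy : ∃ b ∈ C, (∀ c ∈ C, ρ y b ≤ ρ y c) ∧ ρ y b ≤ rt b
  · obtain ⟨b, hbC, hbmin, hbrt⟩ := hy
    have hrty : r y = δ ^ 2 * rt b := hr1 y b hbC hbmin hbrt
    have hrtb : 0 < rt b := hrt b hbC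
    by_cases hx : ∃ a ∈ C, (∀ c ∈ C, ρ x a ≤ ρ x c) ∧ ρ x a ≤ rt a
    · obtain ⟨a, haC, hamin, hart⟩ := hx
      have hrtx : r x = δ ^ 2 * rt a := hr1 x a haC hamin hart
      rw [hrtx, hrty]
      by_cases hab : a = b
      · subst hab
        nlinarith [mul_nonneg (by linarith : (0:ℝ) ≤ σ - 1) (mul_pos hδsq hrtb).le,
          mul_nonneg (mul_nonneg hσ0.le hδsq.le) hρxy]
      · -- separation: 4 rt a ≤ ρ a b ≤ σ(ρ a x + ρ x b) ≤ σ rt a + σ² ρxy + σ² rt b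
        have h1 := hsep a haC b hbC hab
        have h2' := htri a b x
        have h3 := htri x b y
        have hax : ρ a x = ρ x a := hρsymm a x
        have hyb : ρ y b ≤ rt b := hbrt
        have t : ρ x b ≤ σ * ρ x y + σ * rt b := by
          nlinarith [mul_le_mul_of_nonneg_left hyb hσ0.le]
        have e1 : 4 * rt a ≤ σ * rt a + σ ^ 2 * ρ x y + σ ^ 2 * rt b := by
          nlinarith [mul_le_mul_of_nonneg_left t hσ0.le,
            mul_le_mul_of_nonneg_left hart hσ0.le]
        have key : rt a ≤ σ * rt b + σ * ρ x y := by
          nlinarith [mul_nonneg (mul_nonneg hσ0.le (by linarith : (0:ℝ) ≤ 4 - 2*σ))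
            (by nlinarith : (0:ℝ) ≤ rt b + ρ x y)]
        nlinarith [mul_le_mul_of_nonneg_left key hδsq.le]
    · obtain ⟨a, haC, hamin, hrtx⟩ := hr2 x hx
      rw [hrtx, hrty]
      have h3 : ρ x a ≤ ρ x b := hamin b hbC
      have h4 := htri x b y
      have key : ρ x a ≤ σ * rt b + σ * ρ x y := by nlinarith
      nlinarith [mul_le_mul_of_nonneg_left key hδsq.le]
  · obtain ⟨b, hbC, hbmin, hrty⟩ := hr2 y hy
    have hρyb := hρnonneg y b
    by_cases hx : ∃ a ∈ C, (∀ c ∈ C, ρ x a ≤ ρ x c) ∧ ρ x a ≤ rt a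
    · obtain ⟨a, haC, hamin, hart⟩ := hx
      have hrtx : r x = δ ^ 2 * rt a := hr1 x a haC hamin hart
      rw [hrtx, hrty]
      by_cases hab : a = b
      · -- y is not in case 1, and a = b is nearest to y, so rt a < ρ y b
        push_neg at hy
        have hgt : rt b < ρ y b := hy b hbC hbmin
        subst hab
        have key : rt a ≤ σ * ρ y a + σ * ρ x y := by nlinarith
        nlinarith [mul_le_mul_of_nonneg_left key hδsq.le]
      · have h1 := hsep a haC b hbC hab
        have h2' := htri a b y
        have h3 := htri a y x
        have hax : ρ a x = ρ x a := hρsymm a x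
        have t : ρ a y ≤ σ * rt a + σ * ρ x y := by
          nlinarith [mul_le_mul_of_nonneg_left hart hσ0.le]
        have e1 : 4 * rt a ≤ σ ^ 2 * rt a + σ ^ 2 * ρ x y + σ * ρ y b := by
          nlinarith [mul_le_mul_of_nonneg_left t hσ0.le]
        have key : rt a ≤ σ * ρ y b + σ * ρ x y := by
          nlinarith [mul_nonneg (mul_nonneg hσ0.le (by nlinarith : (0:ℝ) ≤ 4 - σ - σ^2)) hρxy,
            mul_nonneg (mul_nonneg hσ0.le (by nlinarith : (0:ℝ) ≤ 3 - σ^2)) hρyb]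
        nlinarith [mul_le_mul_of_nonneg_left key hδsq.le]
    · obtain ⟨a, haC, hamin, hrtx⟩ := hr2 x hx
      rw [hrtx, hrty]
      have h3 : ρ x a ≤ ρ x b := hamin b hbC
      have h4 := htri x b y
      have key : ρ x a ≤ σ * ρ y b + σ * ρ x y := by nlinarith
      nlinarith [mul_le_mul_of_nonneg_left key hδsq.le]
end

section
/- Let (X, d) be a compact metric space, S ⊆ X a subset, ρ₀ > 0, and r : S → ℝ a function with r(x) ≥ ρ₀ for all x ∈ S, satisfying r(x) ≤ σ·r(y) + δ·d(x,y) for all x, y ∈ S, where 1 ≤ σ ≤ 3/2 and 0 ≤ δ ≤ 1/10. Let A ⊆ S be a set such that the open balls {B(x, r(x))}_{x ∈ A} are pairwise disjoint. Then there exists a finite set B with A ⊆ B ⊆ S such that the balls {B(x, r(x))}_{x ∈ B} are pairwise disjoint and S ⊆ ⋃_{x ∈ B} B(x, 3·r(x)). -/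
/-- Metric-space version of Lemma 4.5 (maximal covering): in a compact metric
space, given `A ⊆ S` with radius function `r ≥ ρ₀` on `S` that is
`(σ, δ)`-Lipschitz, any pairwise disjoint family of balls centered in `A` can
be extended to a maximal finite pairwise disjoint family `B ⊆ S` whose tripled
balls cover `S`. -/
theorem maximal_covering {X : Type*} [MetricSpace X] [CompactSpace X]
    (S : Set X) (ρ₀ : ℝ) (hρ₀ : 0 < ρ₀)
    (r : X → ℝ) (σ δ : ℝ)
    (hσ1 : 1 ≤ σ) (hσ2 : σ ≤ 3 / 2) (hδ0 : 0 ≤ δ) (hδ1 : δ ≤ 1 / 10)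
    (hlow : ∀ x ∈ S, ρ₀ ≤ r x)
    (hLip : ∀ x ∈ S, ∀ y ∈ S, r x ≤ σ * r y + δ * dist x y)
    (A : Set X) (hAS : A ⊆ S)
    (hdisj : A.Pairwise fun x y =>
      Disjoint (Metric.ball x (r x)) (Metric.ball y (r y))) :
    ∃ B : Finset X, A ⊆ ↑B ∧ ↑B ⊆ S ∧
      (↑B : Set X).Pairwise (fun x y =>
        Disjoint (Metric.ball x (r x)) (Metric.ball y (r y))) ∧
      S ⊆ ⋃ x ∈ B, Metric.ball x (3 * r x) := by
  set D : X → X → Prop := fun x y =>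
    Disjoint (Metric.ball x (r x)) (Metric.ball y (r y)) with hD
  set 𝒮 : Set (Set X) := {T | A ⊆ T ∧ T ⊆ S ∧ T.Pairwise D} with h𝒮
  -- Zorn's lemma gives a maximal element
  obtain ⟨T, hAT, hTmax⟩ := zorn_subset_nonempty 𝒮
    (fun c hc hchain hne => by
      refine ⟨⋃₀ c, ⟨?_, ?_, ?_⟩, fun s hs => Set.subset_sUnion_of_mem hs⟩
      · obtain ⟨t, ht⟩ := hne
        exact (hc ht).1.trans (Set.subset_sUnion_of_mem ht)
      · exact Set.sUnion_subset fun t ht => (hc ht).2.1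
      · intro x hx y hy hxy
        obtain ⟨t, ht, hxt⟩ := hx
        obtain ⟨u, hu, hyu⟩ := hy
        rcases hchain.total ht hu with h | h
        · exact (hc hu).2.2 (h hxt) hyu hxy
        · exact (hc ht).2.2 hxt (h hyu) hxy)
    A ⟨Set.Subset.rfl, hAS, hdisj⟩
  obtain ⟨⟨hAT', hTS, hTpw⟩, hmax⟩ := hTmax
  -- points of T are ρ₀-separated
  have hsep : ∀ x ∈ T, ∀ y ∈ T, x ≠ y → ρ₀ ≤ dist x y := by
    intro x hx y hy hxy
    by_contra h
    push_neg at h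
    have hyx : y ∈ Metric.ball x (r x) := by
      rw [Metric.mem_ball, dist_comm]
      exact h.trans_le (hlow x (hTS hx))
    have hyy : y ∈ Metric.ball y (r y) :=
      Metric.mem_ball_self (hρ₀.trans_le (hlow y (hTS hy)))
    exact Set.disjoint_left.mp (hTpw hx hy hxy) hyx hyy
  -- T is finite
  have hfin : T.Finite := by
    obtain ⟨t, htfin, ht⟩ := Metric.totallyBounded_iff.mp
      ((isCompact_univ : IsCompact (Set.univ : Set X)).totallyBounded) (ρ₀ / 2) (by linarith)
    choose f hf using fun x (hx : x ∈ T) => by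
      have := ht (Set.mem_univ x)
      simp only [Set.mem_iUnion] at this
      exact this
    have hinj : Set.InjOn (fun x : T => f x.1 x.2) Set.univ := by
      rintro ⟨x, hx⟩ - ⟨y, hy⟩ - hxy
      simp only at hxy
      by_contra hne
      have hne' : x ≠ y := fun h => hne (by simp [h])
      have h1 := (hf x hx).2
      have h2 := (hf y hy).2
      rw [Metric.mem_ball] at h1 h2
      have : dist x y < ρ₀ := by
        calc dist x y ≤ dist x (f x hx) + dist (f x hx) y := dist_triangle _ _ _
        _ = dist x (f x hx) + dist y (f y hy) := by
            have hxy' : f x hx = f y hy := hxy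
            rw [hxy', dist_comm (f y hy) y]
        _ < ρ₀ / 2 + ρ₀ / 2 := by exact add_lt_add h1 h2
        _ = ρ₀ := by ring
      exact absurd (hsep x hx y hy hne') (not_le.mpr this)
    have : Finite T := by
      have : Finite t := htfin
      exact Finite.of_injective (fun x : T => (⟨f x.1 x.2, (hf x.1 x.2).1⟩ : t))
        (fun a b h => hinj (Set.mem_univ a) (Set.mem_univ b) (congrArg Subtype.val h))
    exact Set.toFinite T
  refine ⟨hfin.toFinset, ?_, ?_, ?_, ?_⟩
  · simpa using hAT
  · simpa using hTS
  · simpa using hTpw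
  · intro s hs
    simp only [Set.mem_iUnion, Set.Finite.mem_toFinset, Finset.mem_coe]
    -- ball s (r s) must meet some ball of T, by maximality
    have hrs : 0 < r s := hρ₀.trans_le (hlow s hs)
    by_cases hsT : s ∈ T
    · exact ⟨s, by simpa using hsT, Metric.mem_ball_self (by linarith)⟩
    have : ¬ ∀ x ∈ T, D s x := by
      intro hall
      have hmem : T ∪ {s} ∈ 𝒮 := by
        refine ⟨hAT.trans Set.subset_union_left, ?_, ?_⟩
        · exact Set.union_subset hTS (by simpa using hs)
        · intro x hx y hy hxy
          rcases hx with hx | hx <;> rcases hy with hy | hy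
          · exact hTpw hx hy hxy
          · simp only [Set.mem_singleton_iff] at hy
            subst hy
            exact (hall x hx).symm
          · simp only [Set.mem_singleton_iff] at hx
            subst hx
            exact hall y hy
          · simp_all
      have := hmax hmem Set.subset_union_left
      exact hsT (this (Set.mem_union_right _ rfl))
    push_neg at this
    obtain ⟨x, hxT, hnd⟩ := this
    rw [hD, Set.not_disjoint_iff] at hnd
    obtain ⟨z, hz1, hz2⟩ := hnd
    rw [Metric.mem_ball] at hz1 hz2
    have hdsx : dist s x < r s + r x := by
      calc dist s x ≤ dist s z + dist z x := dist_triangle _ _ _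
      _ = dist z s + dist z x := by rw [dist_comm]
      _ < r s + r x := add_lt_add hz1 hz2
    have hrx : 0 < r x := hρ₀.trans_le (hlow x (hTS hxT))
    have hlip := hLip s hs x (hTS hxT)
    have : r s ≤ (3/2) * r x + (1/10) * dist s x := by
      calc r s ≤ σ * r x + δ * dist s x := hlip
      _ ≤ (3/2) * r x + (1/10) * dist s x := by
          have := dist_nonneg (x := s) (y := x)
          nlinarith
    refine ⟨x, by simpa using hxT, ?_⟩
    rw [Metric.mem_ball]
    linarith
end

section
/- Let X be a set, T > 0, C_I > 0, and for each r ∈ (0, √T] let d_r be a pseudometric on X satisfying the scaling distortion property d_r(x,y) ≤ (ρ/r)^{2·C_I}·d_ρ(x,y) for all 0 < r ≤ ρ ≤ √T and all x, y ∈ X. Define D_R(x,y) = inf{ r ∈ (0, √T] : d_r(x,y) < rR } (with D_R(x,y) = +∞ if no such r exists). Let s ∈ (0, √T], R' > 0 and R'' ≥ 4^{2·C_I + 1}·R'. If D_{R'}(x,y) < 4·s, then D_{R''}(x,y) ≤ s. -/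
open scoped ENNReal

/-- Upgrading a scale-distance bound using the type-I scaling distortion
`d_r ≤ (ρ/r)^(2 C_I) d_ρ` for `r ≤ ρ`: if `R'' ≥ 4^(2 C_I + 1) R'` and
`D_{R'}(x,y) < 4 s`, then `D_{R''}(x,y) ≤ s`. -/
theorem scaleDist_upgrade {X : Type*} (d : ℝ → X → X → ℝ)
    (T C_I : ℝ) (hT : 0 < T) (hCI : 0 < C_I)
    (hnonneg : ∀ r, 0 < r → r ≤ Real.sqrt T → ∀ x y, 0 ≤ d r x y)
    (hsymm : ∀ r, 0 < r → r ≤ Real.sqrt T → ∀ x y, d r x y = d r y x)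
    (hself : ∀ r, 0 < r → r ≤ Real.sqrt T → ∀ x, d r x x = 0)
    (htri : ∀ r, 0 < r → r ≤ Real.sqrt T → ∀ x y z,
      d r x y ≤ d r x z + d r z y)
    (hdistort : ∀ r ρ, 0 < r → r ≤ ρ → ρ ≤ Real.sqrt T → ∀ x y,
      d r x y ≤ (ρ / r) ^ (2 * C_I) * d ρ x y)
    (s R' R'' : ℝ) (hs : 0 < s) (hs' : s ≤ Real.sqrt T) (hR' : 0 < R')
    (hR'' : (4 : ℝ) ^ (2 * C_I + 1) * R' ≤ R'') :
    ∀ x y : X,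
      scaleDist d T R' x y < ENNReal.ofReal (4 * s) →
      scaleDist d T R'' x y ≤ ENNReal.ofReal s := by
  intro x y h
  have hCI2 : (0:ℝ) ≤ 2 * C_I := by positivity
  have hpow1 : (1:ℝ) ≤ (4:ℝ) ^ (2 * C_I + 1) :=
    Real.one_le_rpow (by norm_num) (by linarith)
  have hR'R'' : R' ≤ R'' := by nlinarith
  obtain ⟨e, ⟨r, hr0, hrT, hd, rfl⟩, hlt⟩ := sInf_lt_iff.mp h
  have hr4s : r < 4 * s := by
    have := (ENNReal.ofReal_lt_ofReal_iff (by positivity)).mp hlt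
    linarith
  rcases le_or_gt r s with hrs | hsr
  · -- r itself works
    refine le_trans (sInf_le ⟨r, hr0, hrT, ?_, rfl⟩) ?_
    · exact hd.trans_le (by nlinarith)
    · exact ENNReal.ofReal_le_ofReal hrs
  · -- use scale s
    refine sInf_le ⟨s, hs, hs', ?_, rfl⟩
    have h1 : d s x y ≤ (r / s) ^ (2 * C_I) * d r x y :=
      hdistort s r hs hsr.le hrT x y
    have hratio : (r / s) ^ (2 * C_I) ≤ (4:ℝ) ^ (2 * C_I) :=
      Real.rpow_le_rpow (by positivity)
        (by rw [div_le_iff₀ hs]; linarith) hCI2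
    have hdr0 : 0 ≤ d r x y := hnonneg r hr0 hrT x y
    have h2 : (r / s) ^ (2 * C_I) * d r x y < (4:ℝ) ^ (2 * C_I) * (r * R') := by
      have h4pos : (0:ℝ) < (4:ℝ) ^ (2 * C_I) := by positivity
      calc (r / s) ^ (2 * C_I) * d r x y ≤ (4:ℝ) ^ (2 * C_I) * d r x y :=
            mul_le_mul_of_nonneg_right hratio hdr0
        _ < (4:ℝ) ^ (2 * C_I) * (r * R') := by
            exact (mul_lt_mul_iff_right₀ h4pos).mpr hd
    have h3 : (4:ℝ) ^ (2 * C_I) * (r * R') ≤ (4:ℝ) ^ (2 * C_I + 1) * (s * R') := by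
      have : (4:ℝ) ^ (2 * C_I + 1) = (4:ℝ) ^ (2 * C_I) * 4 := by
        rw [Real.rpow_add (by norm_num), Real.rpow_one]
      rw [this]
      have h4pos : (0:ℝ) < (4:ℝ) ^ (2 * C_I) := by positivity
      have hrs' : r * R' ≤ 4 * (s * R') := by nlinarith
      calc (4:ℝ) ^ (2 * C_I) * (r * R') ≤ (4:ℝ) ^ (2 * C_I) * (4 * (s * R')) :=
            mul_le_mul_of_nonneg_left hrs' h4pos.le
        _ = (4:ℝ) ^ (2 * C_I) * 4 * (s * R') := by ring
    have h4 : (4:ℝ) ^ (2 * C_I + 1) * (s * R') ≤ s * R'' := by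
      nlinarith
    linarith
end
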